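/- arXiv:1803.04524 — 2 statements merged into one kernel-verified Lean document; each statement's English description precedes it below -/
import Mathlib

section
/- Let f : ℝ → ℝ be differentiable on a closed interval X = [a,b] with f'(t) ≠ 0 for every t ∈ [a,b], and suppose x* ∈ [a,b] satisfies f(x*) = 0. Let m = (a+b)/2 be the midpoint of X and define N(X) = { m − f(m)/s : s ∈ f'([a,b]) }. Then x* ∈ N(X) ∩ [a,b]. (Single step of the Moore–Newton interval method preserves the inclusion of the zero.) -/
open Set

/-- A single step of the Moore–Newton interval method preserves the
inclusion of the zero: with `m = (a+b)/2` the midpoint of `X = [a,b]` and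
`N(X) = { m - f m / s : s ∈ f' '' [a,b] }`, the zero `x*` lies in `N(X) ∩ [a,b]`. -/
theorem stmt_1 (f f' : ℝ → ℝ) (a b : ℝ) (hab : a ≤ b)
    (hderiv : ∀ t ∈ Icc a b, HasDerivAt f (f' t) t)
    (hne : ∀ t ∈ Icc a b, f' t ≠ 0)
    (xstar : ℝ) (hxstar : xstar ∈ Icc a b) (hzero : f xstar = 0) :
    xstar ∈ {y : ℝ | ∃ s ∈ f' '' Icc a b, y = (a + b) / 2 - f ((a + b) / 2) / s}
      ∩ Icc a b := by
  set m := (a + b) / 2 with hm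
  have hmX : m ∈ Icc a b := by
    constructor <;> simp only [hm] <;> linarith [hab]
  refine ⟨?_, hxstar⟩
  rcases lt_trichotomy xstar m with hlt | heq | hgt
  · -- MVT on [xstar, m]
    have hsub : Icc xstar m ⊆ Icc a b :=
      Icc_subset_Icc hxstar.1 hmX.2
    obtain ⟨c, hc, hceq⟩ := exists_hasDerivAt_eq_slope f f' hlt
      (fun t ht => (hderiv t (hsub ht)).continuousAt.continuousWithinAt)
      (fun t ht => hderiv t (hsub (Ioo_subset_Icc_self ht)))
    have hcX : c ∈ Icc a b := hsub (Ioo_subset_Icc_self hc)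
    refine ⟨f' c, ⟨c, hcX, rfl⟩, ?_⟩
    have hs : f' c ≠ 0 := hne c hcX
    have hmx : m - xstar ≠ 0 := sub_ne_zero.mpr hlt.ne'
    have key : f' c * (m - xstar) = f m := by
      rw [hceq, hzero, sub_zero, div_mul_cancel₀ _ hmx]
    rw [← key, mul_div_cancel_left₀ _ hs]
    ring
  · refine ⟨f' m, ⟨m, hmX, rfl⟩, ?_⟩
    rw [← heq, hzero, zero_div, sub_zero]
  · have hsub : Icc m xstar ⊆ Icc a b :=
      Icc_subset_Icc hmX.1 hxstar.2
    obtain ⟨c, hc, hceq⟩ := exists_hasDerivAt_eq_slope f f' hgt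
      (fun t ht => (hderiv t (hsub ht)).continuousAt.continuousWithinAt)
      (fun t ht => hderiv t (hsub (Ioo_subset_Icc_self ht)))
    have hcX : c ∈ Icc a b := hsub (Ioo_subset_Icc_self hc)
    refine ⟨f' c, ⟨c, hcX, rfl⟩, ?_⟩
    have hs : f' c ≠ 0 := hne c hcX
    have hmx : xstar - m ≠ 0 := sub_ne_zero.mpr hgt.ne'
    have key : f' c * (xstar - m) = 0 - f m := by
      rw [hceq, hzero, div_mul_cancel₀ _ hmx]
    have hfm : f m = f' c * (m - xstar) := by linear_combination key
    rw [hfm, mul_div_cancel_left₀ _ hs]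
    ring
end

section
/- Let f : ℝ → ℝ be differentiable on a closed interval [a₀,b₀] with f'(t) ≠ 0 for every t ∈ [a₀,b₀], and let x* ∈ [a₀,b₀] with f(x*) = 0. Suppose (Xₖ)ₖ≥0 is a sequence of subsets of ℝ with X₀ = [a₀,b₀] and, for every k, Xₖ₊₁ = N(Xₖ) ∩ Xₖ, where N(Xₖ) = { mₖ − f(mₖ)/s : s ∈ f'(Xₖ) } for some point mₖ ∈ Xₖ. Then for every k ≥ 0 one has x* ∈ Xₖ, and the sequence is nested: Xₖ₊₁ ⊆ Xₖ for every k. -/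
/-!
By Darboux's theorem `f'` maps an order-connected set `S` onto an interval; when `f'` has no zero
on `S`, the map `s ↦ m - f m / s` is continuous there, so the Newton set `N(S)` is again an
interval. The mean value theorem between `m` and a zero `x` in `S` yields a slope
`f' c = f m / (m - x)` with `c ∈ S`, and the Newton step with this slope lands exactly on `x`.
Hence, by induction, every iterate is an interval containing `x*`.
-/

open Set

def newtonSet (f f' : ℝ → ℝ) (m : ℝ) (S : Set ℝ) : Set ℝ :=
  {y : ℝ | ∃ s ∈ f' '' S, y = m - f m / s}

section

variable {f f' : ℝ → ℝ} {S : Set ℝ}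

theorem newtonSet_eq_image (m : ℝ) :
    newtonSet f f' m S = (fun s => m - f m / s) '' (f' '' S) := by
  ext y
  simp only [newtonSet, mem_ofPred_eq, mem_image]
  exact exists_congr fun s => and_congr_right fun _ => eq_comm

theorem Set.OrdConnected.exists_mem_sub_eq_mul (hS : S.OrdConnected)
    (hf : ∀ t ∈ S, HasDerivAt f (f' t) t) {a b : ℝ} (ha : a ∈ S) (hb : b ∈ S) :
    ∃ c ∈ S, f b - f a = f' c * (b - a) := by
  wlog hle : a ≤ b generalizing a b
  · obtain ⟨c, hc, hslope⟩ := this hb ha (le_of_not_ge hle)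
    exact ⟨c, hc, by linarith⟩
  rcases hle.eq_or_lt with rfl | hlt
  · exact ⟨a, ha, by ring⟩
  have hIcc : Icc a b ⊆ S := hS.out ha hb
  obtain ⟨c, hc, hslope⟩ := exists_hasDerivAt_eq_slope f f' hlt
    (fun t ht => (hf t (hIcc ht)).continuousAt.continuousWithinAt)
    (fun t ht => hf t (hIcc (Ioo_subset_Icc_self ht)))
  refine ⟨c, hIcc (Ioo_subset_Icc_self hc), ?_⟩
  rw [hslope, div_mul_cancel₀ _ (sub_ne_zero.2 hlt.ne')]

theorem Set.OrdConnected.mem_newtonSet_of_eq_zero (hS : S.OrdConnected)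
    (hf : ∀ t ∈ S, HasDerivAt f (f' t) t) (hf' : ∀ t ∈ S, f' t ≠ 0)
    {m x : ℝ} (hm : m ∈ S) (hx : x ∈ S) (hfx : f x = 0) : x ∈ newtonSet f f' m S := by
  obtain ⟨c, hc, hslope⟩ := hS.exists_mem_sub_eq_mul hf hx hm
  rw [hfx, sub_zero] at hslope
  refine ⟨f' c, mem_image_of_mem f' hc, ?_⟩
  rw [hslope, mul_div_cancel_left₀ _ (hf' c hc), sub_sub_cancel]

theorem Set.OrdConnected.newtonSet (hS : S.OrdConnected)
    (hf : ∀ t ∈ S, HasDerivAt f (f' t) t) (hf' : ∀ t ∈ S, f' t ≠ 0) (m : ℝ) :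
    (newtonSet f f' m S).OrdConnected := by
  have hdarboux : IsPreconnected (f' '' S) :=
    isPreconnected_iff_ordConnected.2 <|
      hS.image_hasDerivWithinAt fun t ht => (hf t ht).hasDerivWithinAt
  have hcont : ContinuousOn (fun s => m - f m / s) (f' '' S) := by
    rintro _ ⟨t, ht, rfl⟩
    exact (continuousAt_const.sub (continuousAt_const.div continuousAt_id (hf' t ht)))
      |>.continuousWithinAt
  rw [newtonSet_eq_image, ← isPreconnected_iff_ordConnected]
  exact hdarboux.image _ hcont

end

theorem stmt_2_general (f f' : ℝ → ℝ) (a₀ b₀ : ℝ)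
    (hderiv : ∀ t ∈ Icc a₀ b₀, HasDerivAt f (f' t) t)
    (hne : ∀ t ∈ Icc a₀ b₀, f' t ≠ 0)
    (xstar : ℝ) (hxstar : xstar ∈ Icc a₀ b₀) (hzero : f xstar = 0)
    (X : ℕ → Set ℝ) (m : ℕ → ℝ) (hm : ∀ k, m k ∈ X k)
    (hX0 : X 0 = Icc a₀ b₀)
    (hXsucc : ∀ k, X (k + 1) =
      {y : ℝ | ∃ s ∈ f' '' X k, y = m k - f (m k) / s} ∩ X k) :
    (∀ k, xstar ∈ X k) ∧ (∀ k, X (k + 1) ⊆ X k) := by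
  have hnested : ∀ k, X (k + 1) ⊆ X k := fun k => hXsucc k ▸ inter_subset_right
  have hsub : ∀ k, X k ⊆ Icc a₀ b₀ := fun k =>
    hX0 ▸ antitone_nat_of_succ_le hnested (Nat.zero_le k)
  have hinv : ∀ k, xstar ∈ X k ∧ (X k).OrdConnected := by
    intro k
    induction k with
    | zero => exact hX0 ▸ ⟨hxstar, ordConnected_Icc⟩
    | succ k ih =>
      obtain ⟨hxk, hXk⟩ := ih
      have hf : ∀ t ∈ X k, HasDerivAt f (f' t) t := fun t ht => hderiv t (hsub k ht)
      have hf' : ∀ t ∈ X k, f' t ≠ 0 := fun t ht => hne t (hsub k ht)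
      have hstep : X (k + 1) = newtonSet f f' (m k) (X k) ∩ X k := hXsucc k
      rw [hstep]
      exact ⟨⟨hXk.mem_newtonSet_of_eq_zero hf hf' (hm k) hxk hzero, hxk⟩,
        (hXk.newtonSet hf hf' (m k)).inter hXk⟩
  exact ⟨fun k => (hinv k).1, hnested⟩

/-- The Moore–Newton interval iteration `Xₖ₊₁ = N(Xₖ) ∩ Xₖ`, with
`N(Xₖ) = { mₖ - f mₖ / s : s ∈ f' '' Xₖ }` for some point `mₖ ∈ Xₖ`,
keeps the zero `x*` in every iterate and produces a nested sequence. -/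
theorem stmt_2 (f f' : ℝ → ℝ) (a₀ b₀ : ℝ) (hab : a₀ ≤ b₀)
    (hderiv : ∀ t ∈ Icc a₀ b₀, HasDerivAt f (f' t) t)
    (hne : ∀ t ∈ Icc a₀ b₀, f' t ≠ 0)
    (xstar : ℝ) (hxstar : xstar ∈ Icc a₀ b₀) (hzero : f xstar = 0)
    (X : ℕ → Set ℝ) (m : ℕ → ℝ) (hm : ∀ k, m k ∈ X k)
    (hX0 : X 0 = Icc a₀ b₀)
    (hXsucc : ∀ k, X (k + 1) =
      {y : ℝ | ∃ s ∈ f' '' X k, y = m k - f (m k) / s} ∩ X k) :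
    (∀ k, xstar ∈ X k) ∧ (∀ k, X (k + 1) ⊆ X k) :=
  stmt_2_general f f' a₀ b₀ hderiv hne xstar hxstar hzero X m hm hX0 hXsucc
end
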